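/- arXiv:1507.06633 — 2 statements merged into one kernel-verified Lean document; each statement's English description precedes it below -/
import Mathlib

section
/- Let n ≥ 1 and let f : ℂⁿ → ℂⁿ be a bijective ℝ-linear map that is conjugate-linear, i.e. f(c • v) = (conj c) • f(v) for all c ∈ ℂ and v ∈ ℂⁿ. Then the determinant of f, viewed as an ℝ-linear endomorphism of ℂⁿ regarded as a 2n-dimensional real vector space, has sign (−1)ⁿ; that is, (−1)ⁿ • LinearMap.det (f.restrictScalars ℝ) > 0. -/
open Matrix Complex
open Kronecker

noncomputable def realify (n : ℕ) (N : Matrix (Fin n) (Fin n) ℂ) :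
    Matrix (Fin 2 × Fin n) (Fin 2 × Fin n) ℝ :=
  Matrix.of fun p q =>
    if q.1 = 0 then (if p.1 = 0 then (N p.2 q.2).re else (N p.2 q.2).im)
    else (if p.1 = 0 then -(N p.2 q.2).im else (N p.2 q.2).re)

lemma det_realify (n : ℕ) (N : Matrix (Fin n) (Fin n) ℂ) :
    (realify n N).det = Complex.normSq N.det := by
  have hQD : (realify n N).map Complex.ofRealHom * (!![1, 1; -I, I] ⊗ₖ (1 : Matrix (Fin n) (Fin n) ℂ))
      = (!![1, 1; -I, I] ⊗ₖ (1 : Matrix (Fin n) (Fin n) ℂ)) *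
        (Matrix.reindex (Equiv.prodComm (Fin n) (Fin 2)) (Equiv.prodComm (Fin n) (Fin 2))
          (Matrix.blockDiagonal fun a : Fin 2 => if a = 0 then N else N.map (starRingEnd ℂ))) := by
    ext ⟨a, k⟩ ⟨b, j⟩
    simp only [Matrix.mul_apply, Fintype.sum_prod_type, Fin.sum_univ_two,
      Matrix.kroneckerMap_apply, Matrix.map_apply, Matrix.reindex_apply,
      Matrix.submatrix_apply, Equiv.prodComm_symm, Equiv.prodComm_apply, Prod.swap,
      Matrix.blockDiagonal_apply, realify, Matrix.of_apply, Matrix.one_apply]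
    fin_cases a <;> fin_cases b <;> simp <;> simp [Complex.ext_iff]
  have hq : (!![1, 1; -I, I] ⊗ₖ (1 : Matrix (Fin n) (Fin n) ℂ)).det ≠ 0 := by
    rw [Matrix.det_kronecker]
    simp [Matrix.det_fin_two_of, Complex.ext_iff, two_mul]
  have h1 := congrArg Matrix.det hQD
  rw [Matrix.det_mul, Matrix.det_mul, mul_comm] at h1
  have h2 := mul_left_cancel₀ hq h1
  rw [Matrix.det_reindex_self, Matrix.det_blockDiagonal, Fin.prod_univ_two] at h2
  have hc : (N.map ⇑(starRingEnd ℂ)).det = (starRingEnd ℂ) N.det := ((starRingEnd ℂ).map_det N).symm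
  have ho : ((realify n N).map ⇑Complex.ofRealHom).det = ((realify n N).det : ℂ) :=
    (Complex.ofRealHom.map_det (realify n N)).symm
  rw [if_pos rfl, if_neg (by decide : ¬ (1 : Fin 2) = 0), hc, ho, Complex.mul_conj] at h2
  exact_mod_cast h2

noncomputable def cmat (n : ℕ) (N : Matrix (Fin n) (Fin n) ℂ) :
    Matrix (Fin 2 × Fin n) (Fin 2 × Fin n) ℝ :=
  Matrix.of fun p q =>
    if q.1 = 0 then (if p.1 = 0 then (N p.2 q.2).re else (N p.2 q.2).im)
    else (if p.1 = 0 then (N p.2 q.2).im else -(N p.2 q.2).re)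

lemma det_cmat (n : ℕ) (N : Matrix (Fin n) (Fin n) ℂ) :
    (cmat n N).det = (-1 : ℝ) ^ n * Complex.normSq N.det := by
  have h : cmat n N = realify n N * ((!![1, 0; 0, -1] : Matrix (Fin 2) (Fin 2) ℝ) ⊗ₖ
      (1 : Matrix (Fin n) (Fin n) ℝ)) := by
    ext ⟨a, k⟩ ⟨b, j⟩
    simp only [Matrix.mul_apply, Fintype.sum_prod_type, Fin.sum_univ_two,
      Matrix.kroneckerMap_apply, cmat, realify, Matrix.of_apply, Matrix.one_apply]
    fin_cases a <;> fin_cases b <;> simp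
  rw [h, Matrix.det_mul, det_realify, Matrix.det_kronecker]
  simp [Matrix.det_fin_two_of]
  ring

theorem conj_linear_bijective_det_sign (n : ℕ) (hn : 1 ≤ n)
    (f : (Fin n → ℂ) →ₗ[ℝ] (Fin n → ℂ))
    (hbij : Function.Bijective f)
    (hconj : ∀ (c : ℂ) (v : Fin n → ℂ), f (c • v) = (starRingEnd ℂ c) • f v) :
    (-1 : ℝ) ^ n * LinearMap.det f > 0 := by
  classical
  set e := Pi.basisFun ℂ (Fin n) with he
  set B := Complex.basisOneI.smulTower e with hB
  set N : Matrix (Fin n) (Fin n) ℂ := Matrix.of fun k j => f (e j) k with hN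
  have hfm : f = Matrix.toLin B B (cmat n N) := by
    refine B.ext fun ⟨b, j⟩ => ?_
    rw [Matrix.toLin_self]
    have hBapp : ∀ a k, B (a, k) = Complex.basisOneI a • e k := fun a k =>
      Module.Basis.smulTower_apply _ _ _
    have hej : ∀ k : Fin n, e k = Pi.single k (1 : ℂ) := fun k => by simp [he]
    have hfe : ∀ l k : Fin n, f (Pi.single k 1) l = N l k := by
      intro l k
      conv_rhs => rw [hN]
      simp only [Matrix.of_apply, hej]
    fin_cases b
    · simp only [hBapp, Fintype.sum_prod_type, Fin.sum_univ_two]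
      funext l
      simp only [Finset.sum_apply, Pi.smul_apply, cmat, Matrix.of_apply, Complex.coe_basisOneI,
        Matrix.cons_val_zero, Matrix.cons_val_one, Matrix.head_cons, one_smul,
        Pi.basisFun_apply, Pi.single_apply, he, Complex.real_smul, smul_eq_mul, mul_ite,
        mul_one, mul_zero, Finset.sum_ite_eq', Finset.mem_univ, if_true, Fin.mk_zero,
        Fin.mk_one, Pi.add_apply, one_ne_zero, if_false, ite_smul, zero_smul, smul_ite,
        smul_zero, Finset.sum_ite_eq]
      rw [Complex.re_add_im, hfe]
    · simp only [hBapp, Fintype.sum_prod_type, Fin.sum_univ_two]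
      rw [show Complex.basisOneI ⟨1, by norm_num⟩ = Complex.I by
        simp [Complex.coe_basisOneI]]
      rw [show (Complex.I • e j : Fin n → ℂ) = Complex.I • e j from rfl]
      rw [hconj Complex.I (e j), Complex.conj_I]
      funext l
      simp only [Finset.sum_apply, Pi.smul_apply, cmat, Matrix.of_apply, Complex.coe_basisOneI,
        Matrix.cons_val_zero, Matrix.cons_val_one, Matrix.head_cons, one_smul,
        Pi.basisFun_apply, Pi.single_apply, he, Complex.real_smul, smul_eq_mul, mul_ite,
        mul_one, mul_zero, Finset.sum_ite_eq', Finset.mem_univ, if_true, Fin.mk_zero,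
        Fin.mk_one, Pi.add_apply, one_ne_zero, if_false, ite_smul, zero_smul, smul_ite,
        smul_zero, Finset.sum_ite_eq]
      rw [hfe]
      push_cast
      ring_nf
      rw [Complex.ext_iff]
      constructor <;> simp
  have hdet : LinearMap.det f = (-1 : ℝ) ^ n * Complex.normSq N.det := by
    rw [hfm, LinearMap.det_toLin, det_cmat]
  have hne : LinearMap.det f ≠ 0 := by
    have := (LinearEquiv.ofBijective f hbij).isUnit_det'
    have hc : ((LinearEquiv.ofBijective f hbij) : (Fin n → ℂ) →ₗ[ℝ] (Fin n → ℂ)) = f :=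
      LinearMap.ext fun x => rfl
    rw [hc] at this
    exact this.ne_zero
  have hns : Complex.normSq N.det ≠ 0 := by
    intro h0
    exact hne (by rw [hdet, h0, mul_zero])
  have hpos : 0 < Complex.normSq N.det :=
    lt_of_le_of_ne (Complex.normSq_nonneg _) (Ne.symm hns)
  rw [hdet, ← mul_assoc]
  have h11 : (-1 : ℝ) ^ n * (-1 : ℝ) ^ n = 1 := by
    rw [← pow_add, ← two_mul, pow_mul]
    norm_num
  rw [h11, one_mul]
  exact hpos
end

section
/- Let Σ be a metric space with a continuous involution σ : Σ → Σ, let G be a path-connected topological group equipped with a continuous involutive group automorphism g ↦ ḡ, and let f : Σ → G be continuous with f(σ z) = conj(f z) for all z. Suppose x ∈ Σ satisfies σ(x) ≠ x, and U is an open neighborhood of x with U ∩ σ(U) = ∅. Then there exists a continuous map H : Σ × [0,1] → G such that H(·, 0) = f, H(x, 1) = 1 (the identity of G), H(σ z, t) = conj(H(z, t)) for all z and t, and H(z, t) = f(z) for all z ∉ U ∪ σ(U) and all t. -/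
theorem equivariant_homotopy_to_identity_at_point
    {X G : Type*} [MetricSpace X] [TopologicalSpace G] [Group G]
    [IsTopologicalGroup G] [PathConnectedSpace G]
    (σ : X → X) (hσc : Continuous σ) (hσinv : ∀ z, σ (σ z) = z)
    (conj : G →* G) (hconjc : Continuous conj) (hconjinv : ∀ g, conj (conj g) = g)
    (f : X → G) (hfc : Continuous f) (hfe : ∀ z, f (σ z) = conj (f z))
    (x : X) (hx : σ x ≠ x)
    (U : Set X) (hU : IsOpen U) (hxU : x ∈ U) (hUσ : U ∩ σ '' U = ∅) :
    ∃ H : X × unitInterval → G, Continuous H ∧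
      (∀ z, H (z, 0) = f z) ∧ H (x, 1) = 1 ∧
      (∀ z t, H (σ z, t) = conj (H (z, t))) ∧
      (∀ z, z ∉ U ∪ σ '' U → ∀ t, H (z, t) = f z) := by
  obtain ⟨ε, hε, hball⟩ := Metric.isOpen_iff.1 hU x hxU
  set φ : X → ℝ := fun z => max 0 (1 - dist z x / ε) with hφdef
  have hφc : Continuous φ :=
    continuous_const.max (continuous_const.sub
      ((continuous_id.dist continuous_const).div_const ε))
  have hφ0 : ∀ z, z ∉ U → φ z = 0 := by
    intro z hz
    have hd : ¬ dist z x < ε := fun h => hz (hball h)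
    have : 1 - dist z x / ε ≤ 0 := by
      have : (1:ℝ) ≤ dist z x / ε := (one_le_div hε).2 (le_of_not_gt hd)
      linarith
    simp [hφdef, max_eq_left this]
  have hφx : φ x = 1 := by simp [hφdef, hε.le]
  have hσxU : σ x ∉ U := by
    intro h
    have : σ x ∈ U ∩ σ '' U := ⟨h, ⟨x, hxU, rfl⟩⟩
    rw [hUσ] at this; exact this
  obtain p := PathConnectedSpace.somePath (1 : G) (f x)⁻¹
  set γ : ℝ → G := fun s => p (Set.projIcc 0 1 zero_le_one s) with hγdef
  have hγc : Continuous γ := p.continuous.comp continuous_projIcc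
  have hγ0 : γ 0 = 1 := by
    simp [hγdef, Set.projIcc_left]
  have hγ1 : γ 1 = (f x)⁻¹ := by
    simp [hγdef, Set.projIcc_right]
  refine ⟨fun zt => f zt.1 * γ (φ zt.1 * (zt.2 : ℝ)) * conj (γ (φ (σ zt.1) * (zt.2 : ℝ))),
    ?_, ?_, ?_, ?_, ?_⟩
  · have h1 : Continuous fun zt : X × unitInterval => (zt.2 : ℝ) :=
      continuous_subtype_val.comp continuous_snd
    exact ((hfc.comp continuous_fst).mul
      (hγc.comp ((hφc.comp continuous_fst).mul h1))).mul
      (hconjc.comp (hγc.comp ((hφc.comp (hσc.comp continuous_fst)).mul h1)))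
  · intro z
    simp [hγ0]
  · have hφσx : φ (σ x) = 0 := hφ0 _ hσxU
    simp [hφx, hφσx, hγ0, hγ1]
  · intro z t
    by_cases hz : z ∈ U
    · have h1 : φ (σ z) = 0 := by
        apply hφ0
        intro h
        have : σ z ∈ U ∩ σ '' U := ⟨h, ⟨z, hz, rfl⟩⟩
        rw [hUσ] at this; exact this
      simp [hσinv, hfe, h1, hγ0, mul_assoc]
    · have h1 : φ z = 0 := hφ0 _ hz
      simp [hσinv, hfe, h1, hγ0, hconjinv, mul_assoc]
  · intro z hz t
    have h1 : φ z = 0 := hφ0 _ (fun h => hz (Or.inl h))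
    have h2 : φ (σ z) = 0 := by
      apply hφ0
      intro h
      exact hz (Or.inr ⟨σ z, h, hσinv z⟩)
    simp [h1, h2, hγ0]
end
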